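/- arXiv:2004.07055 — 2 statements merged into one kernel-verified Lean document; each statement's English description precedes it below -/
import Mathlib

section
/- Every nontrivial C¹ diffeomorphism f̄ of a closed interval, viewed inside any finitely generated group of C¹ diffeomorphisms of that interval containing f̄, satisfies: there exists A > 0 such that ‖f̄^n‖ ≥ A log(n) for infinitely many integers n ≥ 1. In particular, no nontrivial C¹ interval diffeomorphism is more than logarithmically distorted. -/
/-!
Pick `x₀` with `f x₀ ≠ x₀`; replacing `f` by `f⁻¹` (whose powers have the same word lengths) we may
assume `x₀ < f x₀`. The orbit `cₙ = fⁿ x₀` then increases inside `[a, b]`, so the gaps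
`ℓₙ = cₙ₊₁ - cₙ` are summable, and therefore `n ℓₙ < ℓ₀` for infinitely many `n`, as `∑ 1 / n`
diverges (this is the Polterovich–Sodin observation, read for `f⁻ⁿ`). The map `f⁻ⁿ` sends
`cₙ, cₙ₊₁` to `c₀, c₁` and is a product of `‖fⁿ‖` generators or their inverses, all `K`-Lipschitz
on `[a, b]` since they are `C¹`. Hence `ℓ₀ ≤ K ^ ‖fⁿ‖ ℓₙ < K ^ ‖fⁿ‖ ℓ₀ / n`, i.e.
`log n ≤ ‖fⁿ‖ log K`.
-/

noncomputable def wordLength {G : Type*} [Group G] (S : Set G) (g : G) : ℕ :=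
  sInf {n | ∃ l : List G, l.length = n ∧ (∀ x ∈ l, x ∈ S ∨ x⁻¹ ∈ S) ∧ l.prod = g}

open Set Filter NNReal

section WordLength

variable {G : Type*} [Group G] {S : Set G} {g : G}

lemma exists_list_prod_eq_of_mem_closure (hg : g ∈ Subgroup.closure S) :
    ∃ l : List G, (∀ x ∈ l, x ∈ S ∨ x⁻¹ ∈ S) ∧ l.prod = g := by
  rw [← Subgroup.mem_toSubmonoid, Subgroup.closure_toSubmonoid] at hg
  exact Submonoid.exists_list_of_mem_closure hg

lemma exists_list_length_eq_wordLength (hg : g ∈ Subgroup.closure S) :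
    ∃ l : List G, l.length = wordLength S g ∧ (∀ x ∈ l, x ∈ S ∨ x⁻¹ ∈ S) ∧ l.prod = g := by
  obtain ⟨l, hl, rfl⟩ := exists_list_prod_eq_of_mem_closure hg
  exact Nat.sInf_mem (s := {n | ∃ l' : List G, l'.length = n ∧ (∀ x ∈ l', x ∈ S ∨ x⁻¹ ∈ S) ∧
    l'.prod = l.prod}) ⟨l.length, l, rfl, hl, rfl⟩

lemma wordLength_inv (S : Set G) (g : G) : wordLength S g⁻¹ = wordLength S g := by
  have lengths_subset : ∀ h : G,
      {n | ∃ l : List G, l.length = n ∧ (∀ x ∈ l, x ∈ S ∨ x⁻¹ ∈ S) ∧ l.prod = h} ⊆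
        {n | ∃ l : List G, l.length = n ∧ (∀ x ∈ l, x ∈ S ∨ x⁻¹ ∈ S) ∧ l.prod = h⁻¹} := by
    rintro h _ ⟨l, rfl, hl, rfl⟩
    refine ⟨(l.map (·⁻¹)).reverse, by simp, ?_, (List.prod_inv_reverse l).symm⟩
    simp only [List.mem_reverse, List.mem_map]
    rintro _ ⟨x, hx, rfl⟩
    simpa [or_comm] using hl x hx
  unfold wordLength
  congr 1
  exact (lengths_subset g).antisymm' (by simpa using lengths_subset g⁻¹)

end WordLength

section Interval

variable {α : Type*} [LinearOrder α]

def bijStrictMonoOnSubgroup (s : Set α) : Subgroup (Equiv.Perm α) where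
  carrier := {u | BijOn u s s ∧ StrictMonoOn u s}
  mul_mem' := fun ⟨hu, hu'⟩ ⟨hv, hv'⟩ => ⟨hu.comp hv, hu'.comp hv' hv.mapsTo⟩
  one_mem' := ⟨bijOn_id s, strictMonoOn_id⟩
  inv_mem' := by
    rintro u ⟨hu, hu'⟩
    have hinv : BijOn ⇑u⁻¹ s s := Equiv.bijOn_symm.2 hu
    refine ⟨hinv, fun x hx y hy hxy => ?_⟩
    rw [← hu'.lt_iff_lt (hinv.mapsTo hx) (hinv.mapsTo hy)]
    simpa using hxy

lemma strictMono_orbit {s : Set α} {u : Equiv.Perm α} (hu : u ∈ bijStrictMonoOnSubgroup s)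
    {x : α} (hx : x ∈ s) (hlt : x < u x) : StrictMono fun n : ℕ => (u ^ n) x := by
  have orbit_mem : ∀ n : ℕ, (u ^ n) x ∈ s := fun n =>
    (pow_mem hu n).1.mapsTo hx
  refine strictMono_nat_of_lt_succ fun n => ?_
  induction n with
  | zero => simpa using hlt
  | succ n ih =>
    simpa only [pow_succ', Equiv.Perm.mul_apply] using hu.2 (orbit_mem _) (orbit_mem _) ih

end Interval

section Lipschitz

variable {α : Type*}

lemma lipschitzOnWith_list_prod [PseudoEMetricSpace α] {s : Set α} {K : ℝ≥0}
    (l : List (Equiv.Perm α)) (hl : ∀ u ∈ l, MapsTo u s s ∧ LipschitzOnWith K u s) :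
    MapsTo l.prod s s ∧ LipschitzOnWith (K ^ l.length) l.prod s := by
  induction l with
  | nil => exact ⟨mapsTo_id s, by simpa using LipschitzWith.id.lipschitzOnWith⟩
  | cons u l ih =>
    obtain ⟨hmaps, hlip⟩ := ih fun v hv => hl v (List.mem_cons_of_mem u hv)
    obtain ⟨humaps, hulip⟩ := hl u List.mem_cons_self
    rw [List.prod_cons, Equiv.Perm.coe_mul, List.length_cons, pow_succ']
    exact ⟨humaps.comp hmaps, hulip.comp hlip hmaps⟩

lemma Set.Finite.exists_lipschitzOnWith [PseudoEMetricSpace α] {β ι : Type*}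
    [PseudoEMetricSpace β] {s : Set α} {T : Set ι} (hT : T.Finite) {F : ι → α → β}
    (hF : ∀ i ∈ T, ∃ K, LipschitzOnWith K (F i) s) : ∃ K, ∀ i ∈ T, LipschitzOnWith K (F i) s := by
  choose! K hK using hF
  exact ⟨hT.toFinset.sup K, fun i hi => (hK i hi).weaken (Finset.le_sup (hT.mem_toFinset.2 hi))⟩

/-- Inverting the word for `g` shows that `g⁻¹` is `K ^ wordLength S g`-Lipschitz on `s`. -/
lemma dist_le_pow_wordLength_mul_dist [PseudoMetricSpace α] {s : Set α}
    {S : Set (Equiv.Perm α)} {K : ℝ≥0}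
    (hS : ∀ u, u ∈ S ∨ u⁻¹ ∈ S → MapsTo u s s ∧ LipschitzOnWith K u s)
    {g : Equiv.Perm α} (hg : g ∈ Subgroup.closure S) {x y : α} (hx : g x ∈ s) (hy : g y ∈ s) :
    dist x y ≤ K ^ wordLength S g * dist (g x) (g y) := by
  obtain ⟨l, hlen, hl, hprod⟩ := exists_list_length_eq_wordLength (inv_mem hg)
  have hlip := (lipschitzOnWith_list_prod l fun u hu => hS u (hl u hu)).2
  rw [hprod, hlen, wordLength_inv] at hlip
  simpa using hlip.dist_le_mul _ hx _ hy

end Lipschitz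

lemma summable_sub_of_monotone_of_le {c : ℕ → ℝ} (hc : Monotone c) {B : ℝ} (hB : ∀ n, c n ≤ B) :
    Summable fun n => c (n + 1) - c n := by
  refine summable_of_sum_range_le (c := B - c 0) (fun n => sub_nonneg.2 (hc n.le_succ)) fun n => ?_
  rw [Finset.sum_range_sub c n]
  linarith [hB n]

lemma frequently_natCast_mul_lt_of_summable {ℓ : ℕ → ℝ} (hℓ : Summable ℓ) {ε : ℝ} (hε : 0 < ε) :
    ∃ᶠ n : ℕ in atTop, (n : ℝ) * ℓ n < ε := by
  by_contra h
  simp only [not_frequently, not_lt] at h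
  have : Summable fun n : ℕ => ε * (n : ℝ)⁻¹ := by
    refine hℓ.of_norm_bounded_eventually_nat ?_
    filter_upwards [h, eventually_gt_atTop 0] with n hn hpos
    have hpos' : (0 : ℝ) < n := by exact_mod_cast hpos
    rw [Real.norm_of_nonneg (by positivity), ← div_eq_mul_inv, div_le_iff₀ hpos', mul_comm]
    exact hn
  exact Real.not_summable_natCast_inv ((summable_mul_left_iff hε.ne').1 this)

section Distortion

variable {a b : ℝ} {S : Set (Equiv.Perm ℝ)} {K : ℝ≥0} {f : Equiv.Perm ℝ}

lemma frequently_natCast_le_pow_wordLength_of_lt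
    (hS : ∀ u, u ∈ S ∨ u⁻¹ ∈ S → MapsTo u (Icc a b) (Icc a b) ∧ LipschitzOnWith K u (Icc a b))
    (hf : f ∈ Subgroup.closure S) (hf' : f ∈ bijStrictMonoOnSubgroup (Icc a b))
    {x₀ : ℝ} (hx₀ : x₀ ∈ Icc a b) (hlt : x₀ < f x₀) :
    ∃ᶠ n : ℕ in atTop, (n : ℝ) ≤ K ^ wordLength S (f ^ n) := by
  set c : ℕ → ℝ := fun n => (f ^ n) x₀
  have hc : StrictMono c := strictMono_orbit hf' hx₀ hlt
  have hc_mem : ∀ n, c n ∈ Icc a b := fun n => (pow_mem hf' n).1.mapsTo hx₀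
  have hpow_apply : ∀ n k, (f ^ n) (c k) = c (k + n) := fun n k => by
    simp only [c, ← Equiv.Perm.mul_apply, ← pow_add, add_comm]
  have hgap : 0 < c 1 - c 0 := sub_pos.2 (hc Nat.zero_lt_one)
  have hsum := summable_sub_of_monotone_of_le hc.monotone fun n => (hc_mem n).2
  refine (frequently_natCast_mul_lt_of_summable hsum hgap).mono fun n hn => ?_
  have hdist := dist_le_pow_wordLength_mul_dist hS (pow_mem hf n)
    (x := c 0) (y := c 1) (by simpa only [hpow_apply, zero_add] using hc_mem n)
    (by simpa only [hpow_apply] using hc_mem (1 + n))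
  rw [hpow_apply, hpow_apply, Real.dist_eq, Real.dist_eq, abs_sub_comm, abs_of_pos hgap,
    abs_sub_comm, abs_of_pos (sub_pos.2 (hc (by omega))), zero_add, add_comm] at hdist
  have hK : (0 : ℝ) ≤ (K : ℝ) ^ wordLength S (f ^ n) := by positivity
  nlinarith

lemma frequently_natCast_le_pow_wordLength
    (hS : ∀ u, u ∈ S ∨ u⁻¹ ∈ S → MapsTo u (Icc a b) (Icc a b) ∧ LipschitzOnWith K u (Icc a b))
    (hf : f ∈ Subgroup.closure S) (hf' : f ∈ bijStrictMonoOnSubgroup (Icc a b))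
    {x₀ : ℝ} (hx₀ : x₀ ∈ Icc a b) (hne : f x₀ ≠ x₀) :
    ∃ᶠ n : ℕ in atTop, (n : ℝ) ≤ K ^ wordLength S (f ^ n) := by
  rcases hne.lt_or_gt with hlt | hlt
  · have hfx₀ : f⁻¹ (f x₀) = x₀ := by simp
    have := frequently_natCast_le_pow_wordLength_of_lt hS (inv_mem hf) (inv_mem hf')
      (hf'.1.mapsTo hx₀) (hfx₀.symm ▸ hlt)
    simpa only [inv_pow, wordLength_inv] using this
  · exact frequently_natCast_le_pow_wordLength_of_lt hS hf hf' hx₀ hlt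

end Distortion

lemma exists_pos_mul_log_le_of_frequently_le_pow {K : ℝ} (hK : 1 < K) {L : ℕ → ℕ}
    (h : ∃ᶠ n : ℕ in atTop, (n : ℝ) ≤ K ^ L n) :
    ∃ A : ℝ, 0 < A ∧ ∀ N : ℕ, ∃ n : ℕ, N ≤ n ∧ 1 ≤ n ∧ A * Real.log n ≤ L n := by
  have hlogK : 0 < Real.log K := Real.log_pos hK
  refine ⟨(Real.log K)⁻¹, inv_pos.2 hlogK, fun N => ?_⟩
  obtain ⟨n, hnN, hn, hn1⟩ := frequently_atTop.1 (h.and_eventually (eventually_ge_atTop 1)) N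
  refine ⟨n, hnN, hn1, ?_⟩
  have hlog : Real.log n ≤ L n * Real.log K := by
    rw [← Real.log_pow]
    exact Real.log_le_log (by exact_mod_cast hn1) hn
  rwa [inv_mul_le_iff₀ hlogK, mul_comm]

theorem no_superlogarithmic_distortion_general (a b : ℝ)
    (S : Set (Equiv.Perm ℝ)) (hS : S.Finite)
    (hbij : ∀ u ∈ S, Set.BijOn ⇑u (Set.Icc a b) (Set.Icc a b))
    (hmono : ∀ u ∈ S, StrictMonoOn ⇑u (Set.Icc a b))
    (hC1 : ∀ u ∈ S, ContDiffOn ℝ 1 ⇑u (Set.Icc a b) ∧ ContDiffOn ℝ 1 ⇑u⁻¹ (Set.Icc a b))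
    (f : Equiv.Perm ℝ) (hf : f ∈ Subgroup.closure S)
    (hnontriv : ∃ x ∈ Set.Icc a b, f x ≠ x) :
    ∃ A : ℝ, 0 < A ∧ ∀ N : ℕ, ∃ n : ℕ, N ≤ n ∧ 1 ≤ n ∧
      A * Real.log n ≤ (wordLength S (f ^ n) : ℝ) := by
  have hS_le : Subgroup.closure S ≤ bijStrictMonoOnSubgroup (Icc a b) :=
    Subgroup.closure_le _ |>.2 fun u hu => ⟨hbij u hu, hmono u hu⟩
  have hletter_C1 : ∀ u ∈ S ∪ S⁻¹, ContDiffOn ℝ 1 u (Icc a b) := by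
    rintro u (hu | hu)
    · exact (hC1 u hu).1
    · simpa using (hC1 _ hu).2
  obtain ⟨K, hK⟩ := (hS.union hS.inv).exists_lipschitzOnWith fun u hu =>
    (hletter_C1 u hu).exists_lipschitzOnWith one_ne_zero (convex_Icc a b) isCompact_Icc
  have hletter : ∀ u, u ∈ S ∨ u⁻¹ ∈ S →
      MapsTo u (Icc a b) (Icc a b) ∧ LipschitzOnWith (max K 2) u (Icc a b) := fun u hu =>
    have hu_mem : u ∈ Subgroup.closure S :=
      hu.elim (Subgroup.subset_closure ·) fun h => inv_mem_iff.1 (Subgroup.subset_closure h)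
    ⟨(hS_le hu_mem).1.mapsTo, (hK u hu).weaken (le_max_left K 2)⟩
  obtain ⟨x₀, hx₀, hne⟩ := hnontriv
  refine exists_pos_mul_log_le_of_frequently_le_pow (K := max K 2) ?_
    (frequently_natCast_le_pow_wordLength hletter hf (hS_le hf) hx₀ hne)
  exact_mod_cast one_lt_two.trans_le (le_max_right K 2)

theorem no_superlogarithmic_distortion (a b : ℝ) (hab : a < b)
    (S : Set (Equiv.Perm ℝ)) (hS : S.Finite)
    (hbij : ∀ u ∈ S, Set.BijOn ⇑u (Set.Icc a b) (Set.Icc a b))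
    (hmono : ∀ u ∈ S, StrictMonoOn ⇑u (Set.Icc a b))
    (hC1 : ∀ u ∈ S, ContDiffOn ℝ 1 ⇑u (Set.Icc a b) ∧ ContDiffOn ℝ 1 ⇑u⁻¹ (Set.Icc a b))
    (f : Equiv.Perm ℝ) (hf : f ∈ Subgroup.closure S)
    (hnontriv : ∃ x ∈ Set.Icc a b, f x ≠ x) :
    ∃ A : ℝ, 0 < A ∧ ∀ N : ℕ, ∃ n : ℕ, N ≤ n ∧ 1 ≤ n ∧
      A * Real.log n ≤ (wordLength S (f ^ n) : ℝ) :=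
  no_superlogarithmic_distortion_general a b S hS hbij hmono hC1 f hf hnontriv
end

section
/- For a nontrivial C¹ diffeomorphism f of a closed interval [a,b] (orientation-preserving, f ≠ Id), there exist an increasing sequence of positive integers n_k and points x_k ∈ [a,b] such that Df^{n_k}(x_k) ≥ n_k. -/
/-!
Let `x` be a point with `f x ≠ x` and let `y` be its backward orbit, `f (y (k + 1)) = y k`. It is
monotone, so the gaps `|y (k + 1) - y k|` have total length at most `b - a`; since `∑ 1 / n`
diverges, infinitely often `n * |y (n + 1) - y n| ≤ |y 1 - y 0|`. For such `n`, `f^[n]` maps the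
segment between `y n` and `y (n + 1)` onto the one between `y 0` and `y 1`, and the mean value
theorem gives a point where its derivative is at least `n`.
-/

open Set Filter Finset

theorem Set.SurjOn.exists_backward_orbit {α : Type*} {f : α → α} {s : Set α}
    (hf : SurjOn f s s) {x : α} (hx : x ∈ s) :
    ∃ y : ℕ → α, y 0 = x ∧ (∀ k, y k ∈ s) ∧ ∀ k, f (y (k + 1)) = y k := by
  have : Nonempty α := ⟨x⟩
  refine ⟨fun k => (Function.invFunOn f s)^[k] x, rfl, fun k => hf.mapsTo_invFunOn.iterate k hx,
    fun k => ?_⟩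
  dsimp only
  rw [Function.iterate_succ_apply']
  exact hf.rightInvOn_invFunOn (hf.mapsTo_invFunOn.iterate k hx)

section BackwardOrbit

variable {α : Type*} {f : α → α} {s : Set α} {y : ℕ → α}

theorem iterate_apply_backward_orbit (hstep : ∀ k, f (y (k + 1)) = y k) (n j : ℕ) :
    f^[n] (y (n + j)) = y j := by
  induction n with
  | zero => simp
  | succ n ih => rw [Function.iterate_succ_apply, Nat.add_right_comm, hstep, ih]

theorem StrictMonoOn.strictMono_or_strictAnti_of_backward_orbit [LinearOrder α]
    (hf : StrictMonoOn f s) (hy : ∀ k, y k ∈ s) (hstep : ∀ k, f (y (k + 1)) = y k)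
    (h01 : y 0 ≠ y 1) : StrictMono y ∨ StrictAnti y := by
  rcases h01.lt_or_gt with h | h
  · refine .inl (strictMono_nat_of_lt_succ fun k => ?_)
    induction k with
    | zero => exact h
    | succ k ih => rwa [← hf.lt_iff_lt (hy _) (hy _), hstep, hstep]
  · refine .inr (strictAnti_nat_of_succ_lt fun k => ?_)
    induction k with
    | zero => exact h
    | succ k ih => rwa [← hf.lt_iff_lt (hy _) (hy _), hstep, hstep]

end BackwardOrbit

theorem sum_range_abs_sub_succ_of_monotone_or_antitone {y : ℕ → ℝ}
    (hy : Monotone y ∨ Antitone y) (N : ℕ) :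
    ∑ k ∈ range N, |y (k + 1) - y k| = |y N - y 0| := by
  rcases hy with h | h
  · rw [abs_of_nonneg (sub_nonneg.2 (h N.zero_le)), ← sum_range_sub]
    exact sum_congr rfl fun k _ => abs_of_nonneg (sub_nonneg.2 (h k.le_succ))
  · rw [abs_of_nonpos (sub_nonpos.2 (h N.zero_le)), ← sum_range_sub, ← sum_neg_distrib]
    exact sum_congr rfl fun k _ => abs_of_nonpos (sub_nonpos.2 (h k.le_succ))

theorem summable_abs_sub_succ_of_monotone_or_antitone {y : ℕ → ℝ} {a b : ℝ}
    (hy : Monotone y ∨ Antitone y) (hmem : ∀ k, y k ∈ Icc a b) :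
    Summable fun k => |y (k + 1) - y k| :=
  summable_of_sum_range_le (fun _ => abs_nonneg _) fun N =>
    (sum_range_abs_sub_succ_of_monotone_or_antitone hy N).trans_le
      (Real.dist_le_of_mem_Icc (hmem N) (hmem 0))

theorem frequently_natCast_mul_le_of_summable {m : ℕ → ℝ} (hm : Summable m) {c : ℝ}
    (hc : 0 < c) : ∃ᶠ n : ℕ in atTop, (n : ℝ) * m n ≤ c := by
  by_contra h
  have hlarge : ∀ᶠ n : ℕ in atTop, ‖c * (n : ℝ)⁻¹‖ ≤ m n := by
    filter_upwards [not_frequently.1 h, eventually_gt_atTop 0] with n hn hn0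
    rw [Real.norm_of_nonneg (by positivity), ← div_eq_mul_inv, div_le_iff₀' (by positivity)]
    exact (not_le.1 hn).le
  exact Real.not_summable_natCast_inv
    ((summable_mul_left_iff hc.ne').1 (hm.of_norm_bounded_eventually_nat hlarge))

theorem exists_mem_Icc_derivWithin_eq_slope {g : ℝ → ℝ} {a b c d : ℝ}
    (hg : DifferentiableOn ℝ g (Icc a b)) (hc : c ∈ Icc a b) (hd : d ∈ Icc a b)
    (hcd : c ≠ d) : ∃ ξ ∈ Icc a b, derivWithin g (Icc a b) ξ = slope g c d := by
  wlog hlt : c < d generalizing c d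
  · rw [slope_comm]
    exact this hd hc hcd.symm (hcd.symm.lt_of_le (not_lt.1 hlt))
  have hsub : Icc c d ⊆ Icc a b := Icc_subset_Icc hc.1 hd.2
  obtain ⟨ξ, hξ, hderiv⟩ := exists_deriv_eq_slope g hlt (hg.continuousOn.mono hsub)
    (hg.mono (Ioo_subset_Icc_self.trans hsub))
  have hξ' : ξ ∈ Ioo a b := Ioo_subset_Ioo hc.1 hd.2 hξ
  refine ⟨ξ, Ioo_subset_Icc_self hξ', ?_⟩
  rw [derivWithin_of_mem_nhds (Icc_mem_nhds hξ'.1 hξ'.2), hderiv, slope_def_field]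

theorem exists_natCast_le_derivWithin_iterate {f : ℝ → ℝ} {a b : ℝ}
    (hf : DifferentiableOn ℝ f (Icc a b)) (hmaps : MapsTo f (Icc a b) (Icc a b)) {y : ℕ → ℝ}
    (hy : ∀ k, y k ∈ Icc a b) (hstep : ∀ k, f (y (k + 1)) = y k)
    (hmono : StrictMono y ∨ StrictAnti y) {n : ℕ}
    (hn : (n : ℝ) * |y (n + 1) - y n| ≤ |y 1 - y 0|) :
    ∃ ξ ∈ Icc a b, (n : ℝ) ≤ derivWithin f^[n] (Icc a b) ξ := by
  have hne : y n ≠ y (n + 1) :=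
    hmono.elim (fun h => (h n.lt_succ_self).ne) (fun h => (h n.lt_succ_self).ne')
  obtain ⟨ξ, hξ, hderiv⟩ :=
    exists_mem_Icc_derivWithin_eq_slope (hf.iterate hmaps n) (hy n) (hy (n + 1)) hne
  refine ⟨ξ, hξ, ?_⟩
  have hslope : slope f^[n] (y n) (y (n + 1)) = |y 1 - y 0| / |y (n + 1) - y n| := by
    have hfy0 : f^[n] (y n) = y 0 := iterate_apply_backward_orbit hstep n 0
    rw [slope_def_field, hfy0, iterate_apply_backward_orbit hstep n 1, ← abs_div, abs_of_pos]
    rcases hmono with h | h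
    · exact div_pos (sub_pos.2 (h one_pos)) (sub_pos.2 (h n.lt_succ_self))
    · exact div_pos_of_neg_of_neg (sub_neg.2 (h one_pos)) (sub_neg.2 (h n.lt_succ_self))
  rw [hderiv, hslope, le_div_iff₀ (abs_pos.2 (sub_ne_zero.2 hne.symm))]
  exact hn

theorem polterovich_sodin_large_derivative_general (a b : ℝ) (f : ℝ → ℝ)
    (hbij : Set.BijOn f (Set.Icc a b) (Set.Icc a b))
    (hmono : StrictMonoOn f (Set.Icc a b))
    (hC1 : ContDiffOn ℝ 1 f (Set.Icc a b))
    (hnontriv : ∃ x ∈ Set.Icc a b, f x ≠ x) :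
    ∃ nk : ℕ → ℕ, StrictMono nk ∧ (∀ k, 0 < nk k) ∧
      ∃ xk : ℕ → ℝ, ∀ k, xk k ∈ Set.Icc a b ∧
        (nk k : ℝ) ≤ derivWithin (f^[nk k]) (Set.Icc a b) (xk k) := by
  obtain ⟨x, hx, hfx⟩ := hnontriv
  obtain ⟨y, rfl, hy, hstep⟩ := hbij.surjOn.exists_backward_orbit hx
  have hy01 : y 0 ≠ y 1 := fun h => hfx (by simpa [h] using hstep 0)
  have hymono := hmono.strictMono_or_strictAnti_of_backward_orbit hy hstep hy01
  have hgaps := summable_abs_sub_succ_of_monotone_or_antitone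
    (hymono.imp StrictMono.monotone StrictAnti.antitone) hy
  have hshort : ∃ᶠ n : ℕ in atTop, (n : ℝ) * |y (n + 1) - y n| ≤ |y 1 - y 0| :=
    frequently_natCast_mul_le_of_summable hgaps (abs_pos.2 (sub_ne_zero.2 hy01.symm))
  have hgood : ∃ᶠ n : ℕ in atTop,
      0 < n ∧ ∃ ξ ∈ Icc a b, (n : ℝ) ≤ derivWithin f^[n] (Icc a b) ξ :=
    (hshort.and_eventually (eventually_gt_atTop 0)).mono fun n ⟨hn, hpos⟩ => ⟨hpos,
      exists_natCast_le_derivWithin_iterate (hC1.differentiableOn one_ne_zero) hbij.mapsTo hy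
        hstep hymono hn⟩
  obtain ⟨nk, hnk, hP⟩ := extraction_of_frequently_atTop hgood
  choose hpos xk hxk hder using hP
  exact ⟨nk, hnk, hpos, xk, fun k => ⟨hxk k, hder k⟩⟩

theorem polterovich_sodin_large_derivative (a b : ℝ) (hab : a < b) (f : ℝ → ℝ)
    (hbij : Set.BijOn f (Set.Icc a b) (Set.Icc a b))
    (hmono : StrictMonoOn f (Set.Icc a b))
    (hC1 : ContDiffOn ℝ 1 f (Set.Icc a b))
    (hnontriv : ∃ x ∈ Set.Icc a b, f x ≠ x) :
    ∃ nk : ℕ → ℕ, StrictMono nk ∧ (∀ k, 0 < nk k) ∧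
      ∃ xk : ℕ → ℝ, ∀ k, xk k ∈ Set.Icc a b ∧
        (nk k : ℝ) ≤ derivWithin (f^[nk k]) (Set.Icc a b) (xk k) :=
  polterovich_sodin_large_derivative_general a b f hbij hmono hC1 hnontriv
end
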